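/- arXiv:1711.11505 — 7 statements merged into one kernel-verified Lean document; each statement's English description precedes it below -/
import Mathlib

section
/- Let Γ be a bipartite graph with vertex bipartition A⊔B, where A=A₁⊔A₂ and B=B₁⊔B₂. Suppose (1) for each i,j and each pair of vertices a,a'∈A_i, there is a path from a to a' in the subgraph induced by A_i∪B_j, and (2) for each i,j every element of B_j is adjacent to an element of A_i. Then for each i,j the set A_i∪B_j is a legal state, and the system of moves assigning the move A to each vertex of A and the move B to each vertex of B is a legal system. -/
open SimpleGraph

/-- A state `S` of a graph is *legal* if both `S` and its complement induce
nonempty connected subgraphs. -/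
def Legal {V : Type*} (G : SimpleGraph V) (S : Set V) : Prop :=
  S.Nonempty ∧ Sᶜ.Nonempty ∧ (G.induce S).Connected ∧ (G.induce Sᶜ).Connected

/-- A state is *strongly legal* if it is legal and moreover every vertex of `S`
is adjacent to a vertex of the complement and vice versa. -/
def StronglyLegal {V : Type*} (G : SimpleGraph V) (S : Set V) : Prop :=
  Legal G S ∧ (∀ v ∈ S, ∃ u ∈ Sᶜ, G.Adj v u) ∧ (∀ u ∈ Sᶜ, ∃ v ∈ S, G.Adj u v)

/-- A *system of moves*: each `m v` contains `v` and no neighbour of `v`. -/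
def IsMoveSystem {V : Type*} (G : SimpleGraph V) (m : V → Set V) : Prop :=
  ∀ v, v ∈ m v ∧ ∀ u, G.Adj u v → u ∉ m v

/-- Reachability of states under the group generated by the moves, acting by
symmetric difference. -/
def Reach {V : Type*} (m : V → Set V) : Set V → Set V → Prop :=
  Relation.ReflTransGen fun T T' => ∃ v, T' = symmDiff (m v) T

/-- The orbit of `S` under the moves is a *legal orbit*: all its states are legal. -/
def IsLegalOrbit {V : Type*} (G : SimpleGraph V) (m : V → Set V) (S : Set V) : Prop :=
  ∀ T, Reach m S T → Legal G T

/-- `Γ` has a *legal system* if some system of moves admits a legal orbit. -/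
def HasLegalSystem {V : Type*} (G : SimpleGraph V) : Prop :=
  ∃ (m : V → Set V) (S : Set V), IsMoveSystem G m ∧ IsLegalOrbit G m S


private lemma aux_compl (x x' y y' : Prop) (hc : x ∨ x' ∨ y ∨ y')
    (h1 : ¬(x ∧ x')) (h2 : ¬(y ∧ y')) (h3 : ¬(x ∧ y)) (h4 : ¬(x ∧ y'))
    (h5 : ¬(x' ∧ y)) (h6 : ¬(x' ∧ y')) : ¬(x ∨ y) ↔ x' ∨ y' := by tauto

private lemma aux_sdA (x x' y : Prop) (h1 : ¬(x ∧ x')) (h3 : ¬(x ∧ y)) (h5 : ¬(x' ∧ y)) :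
    ((x ∨ x') ∧ ¬(x ∨ y)) ∨ ((x ∨ y) ∧ ¬(x ∨ x')) ↔ x' ∨ y := by tauto

private lemma aux_sdA' (x x' y : Prop) (h1 : ¬(x ∧ x')) (h3 : ¬(x ∧ y)) (h5 : ¬(x' ∧ y)) :
    ((x' ∨ x) ∧ ¬(x ∨ y)) ∨ ((x ∨ y) ∧ ¬(x' ∨ x)) ↔ x' ∨ y := by tauto

private lemma aux_sdB (x y y' : Prop) (h1 : ¬(y ∧ y')) (h3 : ¬(x ∧ y)) (h5 : ¬(x ∧ y')) :
    ((y ∨ y') ∧ ¬(x ∨ y)) ∨ ((x ∨ y) ∧ ¬(y ∨ y')) ↔ x ∨ y' := by tauto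

private lemma aux_sdB' (x y y' : Prop) (h1 : ¬(y ∧ y')) (h3 : ¬(x ∧ y)) (h5 : ¬(x ∧ y')) :
    ((y' ∨ y) ∧ ¬(x ∨ y)) ∨ ((x ∨ y) ∧ ¬(y' ∨ y)) ↔ x ∨ y' := by tauto

open scoped Classical in
/-- Lemma `TBWS`: high-density bipartite criterion. -/
theorem bipartite_criterion_legal_system
    {V : Type*} [Fintype V] (G : SimpleGraph V) (A B : Fin 2 → Set V)
    (hcover : ∀ v : V, v ∈ A 0 ∨ v ∈ A 1 ∨ v ∈ B 0 ∨ v ∈ B 1)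
    (hdA : Disjoint (A 0) (A 1)) (hdB : Disjoint (B 0) (B 1))
    (hdAB : Disjoint (A 0 ∪ A 1) (B 0 ∪ B 1))
    (hAne : ∀ i, (A i).Nonempty) (hBne : ∀ j, (B j).Nonempty)
    (hbip : ∀ u v, G.Adj u v →
      ¬(u ∈ A 0 ∪ A 1 ∧ v ∈ A 0 ∪ A 1) ∧ ¬(u ∈ B 0 ∪ B 1 ∧ v ∈ B 0 ∪ B 1))
    (h1 : ∀ (i j : Fin 2) (a a' : V) (ha : a ∈ A i) (ha' : a' ∈ A i),
      (G.induce (A i ∪ B j)).Reachable ⟨a, Or.inl ha⟩ ⟨a', Or.inl ha'⟩)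
    (h2 : ∀ (i j : Fin 2), ∀ b ∈ B j, ∃ a ∈ A i, G.Adj b a) :
    (∀ i j : Fin 2, Legal G (A i ∪ B j)) ∧
    IsMoveSystem G (fun v => if v ∈ A 0 ∪ A 1 then A 0 ∪ A 1 else B 0 ∪ B 1) ∧
    IsLegalOrbit G (fun v => if v ∈ A 0 ∪ A 1 then A 0 ∪ A 1 else B 0 ∪ B 1)
      (A 0 ∪ B 0) := by
  classical
  have fin2 : ∀ i : Fin 2, i = 0 ∨ i = 1 := by omega
  have dA : ∀ v, v ∈ A 0 → v ∉ A 1 := fun v h => Set.disjoint_left.1 hdA h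
  have dB : ∀ v, v ∈ B 0 → v ∉ B 1 := fun v h => Set.disjoint_left.1 hdB h
  have dAB : ∀ (i j : Fin 2) v, v ∈ A i → v ∉ B j := by
    intro i j v hv hv'
    have h1 : v ∈ A 0 ∪ A 1 := by
      rcases fin2 i with rfl | rfl
      · exact Or.inl hv
      · exact Or.inr hv
    have h2 : v ∈ B 0 ∪ B 1 := by
      rcases fin2 j with rfl | rfl
      · exact Or.inl hv'
      · exact Or.inr hv'
    exact Set.disjoint_left.1 hdAB h1 h2
  -- complement
  have hcompl : ∀ i j : Fin 2, (A i ∪ B j)ᶜ = A (1 - i) ∪ B (1 - j) := by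
    intro i j
    ext v
    have hc := hcover v
    have gA : ¬(v ∈ A 0 ∧ v ∈ A 1) := fun h => dA v h.1 h.2
    have gA' : ¬(v ∈ A 1 ∧ v ∈ A 0) := fun h => dA v h.2 h.1
    have gB : ¬(v ∈ B 0 ∧ v ∈ B 1) := fun h => dB v h.1 h.2
    have gB' : ¬(v ∈ B 1 ∧ v ∈ B 0) := fun h => dB v h.2 h.1
    have g00 : ¬(v ∈ A 0 ∧ v ∈ B 0) := fun h => dAB 0 0 v h.1 h.2
    have g01 : ¬(v ∈ A 0 ∧ v ∈ B 1) := fun h => dAB 0 1 v h.1 h.2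
    have g10 : ¬(v ∈ A 1 ∧ v ∈ B 0) := fun h => dAB 1 0 v h.1 h.2
    have g11 : ¬(v ∈ A 1 ∧ v ∈ B 1) := fun h => dAB 1 1 v h.1 h.2
    simp only [Set.mem_compl_iff, Set.mem_union]
    rcases fin2 i with rfl | rfl <;> rcases fin2 j with rfl | rfl
    · rw [show (1:Fin 2) - 0 = 1 from rfl]
      exact aux_compl _ _ _ _ hc gA gB g00 g01 g10 g11
    · rw [show (1:Fin 2) - 0 = 1 from rfl, show (1:Fin 2) - 1 = 0 from rfl]
      refine aux_compl _ _ _ _ ?_ gA gB' g01 g00 g11 g10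
      rcases hc with h | h | h | h
      exacts [Or.inl h, Or.inr (Or.inl h), Or.inr (Or.inr (Or.inr h)),
        Or.inr (Or.inr (Or.inl h))]
    · rw [show (1:Fin 2) - 0 = 1 from rfl, show (1:Fin 2) - 1 = 0 from rfl]
      refine aux_compl _ _ _ _ ?_ gA' gB g10 g11 g00 g01
      rcases hc with h | h | h | h
      exacts [Or.inr (Or.inl h), Or.inl h, Or.inr (Or.inr (Or.inl h)),
        Or.inr (Or.inr (Or.inr h))]
    · rw [show (1:Fin 2) - 1 = 0 from rfl]
      refine aux_compl _ _ _ _ ?_ gA' gB' g11 g10 g01 g00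
      rcases hc with h | h | h | h
      exacts [Or.inr (Or.inl h), Or.inl h, Or.inr (Or.inr (Or.inr h)),
        Or.inr (Or.inr (Or.inl h))]
  -- symmetric differences
  have hsdA : ∀ i j : Fin 2, symmDiff (A 0 ∪ A 1) (A i ∪ B j) = A (1 - i) ∪ B j := by
    intro i j
    ext v
    have gA : ¬(v ∈ A 0 ∧ v ∈ A 1) := fun h => dA v h.1 h.2
    have g0j : ¬(v ∈ A 0 ∧ v ∈ B j) := fun h => dAB 0 j v h.1 h.2
    have g1j : ¬(v ∈ A 1 ∧ v ∈ B j) := fun h => dAB 1 j v h.1 h.2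
    simp only [Set.mem_symmDiff, Set.mem_union]
    rcases fin2 i with rfl | rfl
    · rw [show (1:Fin 2) - 0 = 1 from rfl]
      exact aux_sdA _ _ _ gA g0j g1j
    · rw [show (1:Fin 2) - 1 = 0 from rfl]
      exact aux_sdA' _ _ _ (fun h => gA ⟨h.2, h.1⟩) g1j g0j
  have hsdB : ∀ i j : Fin 2, symmDiff (B 0 ∪ B 1) (A i ∪ B j) = A i ∪ B (1 - j) := by
    intro i j
    ext v
    have gB : ¬(v ∈ B 0 ∧ v ∈ B 1) := fun h => dB v h.1 h.2
    have gi0 : ¬(v ∈ A i ∧ v ∈ B 0) := fun h => dAB i 0 v h.1 h.2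
    have gi1 : ¬(v ∈ A i ∧ v ∈ B 1) := fun h => dAB i 1 v h.1 h.2
    simp only [Set.mem_symmDiff, Set.mem_union]
    rcases fin2 j with rfl | rfl
    · rw [show (1:Fin 2) - 0 = 1 from rfl]
      exact aux_sdB _ _ _ gB gi0 gi1
    · rw [show (1:Fin 2) - 1 = 0 from rfl]
      exact aux_sdB' _ _ _ (fun h => gB ⟨h.2, h.1⟩) gi1 gi0
  -- connectivity
  have hconn : ∀ i j : Fin 2, (G.induce (A i ∪ B j)).Connected := by
    intro i j
    obtain ⟨a, ha⟩ := hAne i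
    rw [SimpleGraph.connected_iff]
    refine ⟨?_, ⟨⟨a, Or.inl ha⟩⟩⟩
    have H : ∀ z : ↑(A i ∪ B j), (G.induce (A i ∪ B j)).Reachable z ⟨a, Or.inl ha⟩ := by
      rintro ⟨z, hz | hz⟩
      · exact h1 i j z a hz ha
      · obtain ⟨a', ha', hadj⟩ := h2 i j z hz
        have hadj' : (G.induce (A i ∪ B j)).Adj ⟨z, Or.inr hz⟩ ⟨a', Or.inl ha'⟩ := hadj
        exact hadj'.reachable.trans (h1 i j a' a ha' ha)
    exact fun x y => (H x).trans (H y).symm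
  -- legality of each state
  have hlegal : ∀ i j : Fin 2, Legal G (A i ∪ B j) := by
    intro i j
    obtain ⟨a, ha⟩ := hAne i
    obtain ⟨a', ha'⟩ := hAne (1 - i)
    refine ⟨⟨a, Or.inl ha⟩, ?_, hconn i j, ?_⟩
    · rw [hcompl i j]; exact ⟨a', Or.inl ha'⟩
    · rw [hcompl i j]; exact hconn (1 - i) (1 - j)
  refine ⟨hlegal, ?_, ?_⟩
  · -- move system
    intro v
    by_cases hv : v ∈ A 0 ∪ A 1
    · simp only [if_pos hv]
      exact ⟨hv, fun u hu hmem => (hbip u v hu).1 ⟨hmem, hv⟩⟩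
    · simp only [if_neg hv]
      have hvB : v ∈ B 0 ∪ B 1 := by
        rcases hcover v with h | h | h | h
        · exact absurd (Or.inl h) hv
        · exact absurd (Or.inr h) hv
        · exact Or.inl h
        · exact Or.inr h
      exact ⟨hvB, fun u hu hmem => (hbip u v hu).2 ⟨hmem, hvB⟩⟩
  · -- legal orbit
    intro T hT
    have horbit : ∃ i j : Fin 2, T = A i ∪ B j := by
      induction hT with
      | refl => exact ⟨0, 0, rfl⟩
      | tail _ step ih =>
        obtain ⟨i, j, rfl⟩ := ih
        obtain ⟨v, rfl⟩ := step
        by_cases hv : v ∈ A 0 ∪ A 1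
        · simp only [if_pos hv]
          exact ⟨1 - i, j, hsdA i j⟩
        · simp only [if_neg hv]
          exact ⟨i, 1 - j, hsdB i j⟩
    obtain ⟨i, j, rfl⟩ := horbit
    exact hlegal i j
end

section
/- For integers m ≥ 2k−1 and k ≥ 2, the bipartite graph Λ_{(m,k)} has no legal system: there is no system of moves admitting an orbit consisting entirely of legal states. -/
open SimpleGraph

/-- The bipartite graph `Λ_{(m,k)}` on `{1,…,m} ⊔ (k-subsets of {1,…,m})`,
joining `r` to `A` iff `r ∈ A`. -/
def lambdaGraph (m k : ℕ) :
    SimpleGraph (Fin m ⊕ {A : Finset (Fin m) // A.card = k}) :=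
  SimpleGraph.fromRel fun x y =>
    match x, y with
    | .inl r, .inr A => r ∈ A.1
    | _, _ => False


section Aux

open SimpleGraph

variable {V : Type*} {G : SimpleGraph V}

/-- A connected induced subgraph containing an isolated vertex is a singleton. -/
lemma conn_isolated {T : Set V} (hc : (G.induce T).Connected) {v : V} (hv : v ∈ T)
    (h : ∀ u ∈ T, ¬ G.Adj v u) : T = {v} := by
  have key : ∀ (a b : T) (w : (G.induce T).Walk a b), a = ⟨v, hv⟩ → b = ⟨v, hv⟩ := by
    intro a b w
    induction w with
    | nil => exact fun h => h
    | @cons x y z hxy p ih =>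
      intro hx
      subst hx
      exact absurd (by simpa using hxy) (h y.1 y.2)
  ext u
  simp only [Set.mem_singleton_iff]
  constructor
  · intro hu
    obtain ⟨w⟩ := hc.preconnected ⟨v, hv⟩ ⟨u, hu⟩
    simpa using key _ _ w rfl
  · rintro rfl; exact hv

variable {mv : V → Set V} {S : Set V}

/-- If a vertex outside a legally-reachable state has no neighbour inside it, the
move at that vertex produces the singleton state, and the move is determined. -/
lemma step_out (hmv : IsMoveSystem G mv) (horb : IsLegalOrbit G mv S) {T : Set V}
    (hT : Reach mv S T) {v : V} (hv : v ∉ T) (hN : ∀ u, G.Adj v u → u ∉ T) :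
    Reach mv S {v} ∧ mv v = symmDiff {v} T := by
  set T' := symmDiff (mv v) T with hT'
  have hreach : Reach mv S T' := hT.trans (Relation.ReflTransGen.single ⟨v, rfl⟩)
  have hleg := horb T' hreach
  have hvT' : v ∈ T' := Or.inl ⟨(hmv v).1, hv⟩
  have hiso : ∀ u ∈ T', ¬ G.Adj v u := by
    intro u hu hadj
    rcases hu with ⟨hu1, hu2⟩ | ⟨hu1, hu2⟩
    · exact (hmv v).2 u hadj.symm hu1
    · exact hN u hadj hu1
  have hsing : T' = {v} := conn_isolated hleg.2.2.1 hvT' hiso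
  have hmveq : mv v = symmDiff {v} T := by
    rw [← hsing, hT', symmDiff_symmDiff_cancel_right]
  exact ⟨hsing ▸ hreach, hmveq⟩

/-- Dually, a vertex inside a reachable state with all its neighbours inside is
sent to a co-singleton state. -/
lemma step_in (hmv : IsMoveSystem G mv) (horb : IsLegalOrbit G mv S) {T : Set V}
    (hT : Reach mv S T) {v : V} (hv : v ∈ T) (hN : ∀ u, G.Adj v u → u ∈ T) :
    Reach mv S {v}ᶜ ∧ mv v = symmDiff {v}ᶜ T := by
  set T' := symmDiff (mv v) T with hT'
  have hreach : Reach mv S T' := hT.trans (Relation.ReflTransGen.single ⟨v, rfl⟩)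
  have hleg := horb T' hreach
  have hvT' : v ∈ T'ᶜ := by
    intro h
    rcases h with ⟨hu1, hu2⟩ | ⟨hu1, hu2⟩
    · exact hu2 hv
    · exact hu2 (hmv v).1
  have hiso : ∀ u ∈ T'ᶜ, ¬ G.Adj v u := by
    intro u hu hadj
    have huT : u ∈ T := hN u hadj
    have humv : u ∉ mv v := (hmv v).2 u hadj.symm
    exact hu (Or.inr ⟨huT, humv⟩)
  have hcompl : T'ᶜ = {v} := conn_isolated hleg.2.2.2 hvT' hiso
  have hT'eq : T' = {v}ᶜ := by rw [← compl_compl T', hcompl]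
  have hmveq : mv v = symmDiff {v}ᶜ T := by
    rw [← hT'eq, hT', symmDiff_symmDiff_cancel_right]
  exact ⟨hT'eq ▸ hreach, hmveq⟩

/-- Singleton (or co-singleton) states propagate along non-edges, determining
the corresponding move. -/
lemma sing_prop (hmv : IsMoveSystem G mv) (horb : IsLegalOrbit G mv S) {s t : V}
    (hs : Reach mv S {s} ∨ Reach mv S {s}ᶜ) (hts : t ≠ s) (hadj : ¬ G.Adj t s) :
    (Reach mv S {t} ∨ Reach mv S {t}ᶜ) ∧ mv t = symmDiff {t} {s} := by
  rcases hs with hs | hs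
  · have h := step_out hmv horb hs (v := t) (by simpa using hts)
      (fun u hu hus => hadj (Set.mem_singleton_iff.mp hus ▸ hu))
    exact ⟨Or.inl h.1, h.2⟩
  · have h := step_in hmv horb hs (v := t) (Set.mem_compl_singleton_iff.mpr hts)
      (fun u hu => Set.mem_compl_singleton_iff.mpr (fun h => hadj (h ▸ hu)))
    refine ⟨Or.inr h.1, ?_⟩
    rw [h.2, compl_symmDiff_compl]

end Aux

section Lambda

open SimpleGraph

lemma lambda_adj_ll (m k : ℕ) (r s : Fin m) :
    ¬ (lambdaGraph m k).Adj (Sum.inl r) (Sum.inl s) := by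
  simp [lambdaGraph, SimpleGraph.fromRel_adj]

lemma lambda_adj_rr (m k : ℕ) (A B : {A : Finset (Fin m) // A.card = k}) :
    ¬ (lambdaGraph m k).Adj (Sum.inr A) (Sum.inr B) := by
  simp [lambdaGraph, SimpleGraph.fromRel_adj]

lemma lambda_adj_lr (m k : ℕ) (r : Fin m) (A : {A : Finset (Fin m) // A.card = k}) :
    (lambdaGraph m k).Adj (Sum.inl r) (Sum.inr A) ↔ r ∈ A.1 := by
  simp [lambdaGraph, SimpleGraph.fromRel_adj]

lemma lambda_adj_rl (m k : ℕ) (r : Fin m) (A : {A : Finset (Fin m) // A.card = k}) :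
    (lambdaGraph m k).Adj (Sum.inr A) (Sum.inl r) ↔ r ∈ A.1 := by
  simp [lambdaGraph, SimpleGraph.fromRel_adj]

lemma exists_notMem_block {m k : ℕ} (hkm : k < m)
    (A : {A : Finset (Fin m) // A.card = k}) : ∃ x, x ∉ A.1 := by
  by_contra h
  push_neg at h
  have h2 : (Finset.univ : Finset (Fin m)) ⊆ A.1 := fun y _ => h y
  have := Finset.card_le_card h2
  rw [Finset.card_univ, Fintype.card_fin, A.2] at this
  omega

lemma exists_ne_block (m k : ℕ) (hk : 1 ≤ k) (hkm : k < m)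
    (A : {A : Finset (Fin m) // A.card = k}) :
    ∃ B : {A : Finset (Fin m) // A.card = k}, B ≠ A := by
  obtain ⟨x, hx⟩ := exists_notMem_block hkm A
  obtain ⟨y, hy⟩ : ∃ y, y ∈ A.1 := Finset.card_pos.mp (by rw [A.2]; omega)
  refine ⟨⟨insert x (A.1.erase y), ?_⟩, ?_⟩
  · rw [Finset.card_insert_of_notMem (fun h => hx (Finset.mem_of_mem_erase h)),
      Finset.card_erase_of_mem hy, A.2]
    omega
  · intro h
    exact hx ((congrArg Subtype.val h) ▸ Finset.mem_insert_self x _)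

/-- For `m ≥ 2k-1`, `k ≥ 2`, the graph `Λ_{(m,k)}` has no strongly legal state. -/
theorem no_strongly_legal (m k : ℕ) (hm : 2 * k - 1 ≤ m) (hk : 2 ≤ k)
    (S : Set (Fin m ⊕ {A : Finset (Fin m) // A.card = k})) :
    ¬ StronglyLegal (lambdaGraph m k) S := by
  classical
  rintro ⟨⟨hne, hcne, hcon, hconc⟩, h1, h2⟩
  have hkm : k < m := by omega
  have hSnotsing : ∀ A : {A : Finset (Fin m) // A.card = k}, S ≠ {Sum.inr A} := by
    intro A hSA
    obtain ⟨B, hB⟩ := exists_ne_block m k (by omega) hkm A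
    have hBc : (Sum.inr B : Fin m ⊕ _) ∈ Sᶜ := by
      rw [hSA]; simp [hB]
    obtain ⟨v, hv, hadj⟩ := h2 _ hBc
    rw [hSA, Set.mem_singleton_iff] at hv
    subst hv
    exact lambda_adj_rr m k A B hadj.symm
  have hScnotsing : ∀ A : {A : Finset (Fin m) // A.card = k}, Sᶜ ≠ {Sum.inr A} := by
    intro A hSA
    obtain ⟨B, hB⟩ := exists_ne_block m k (by omega) hkm A
    have hBS : (Sum.inr B : Fin m ⊕ _) ∈ S := by
      by_contra h
      have : (Sum.inr B : Fin m ⊕ _) ∈ Sᶜ := h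
      rw [hSA, Set.mem_singleton_iff] at this
      exact hB (Sum.inr.inj this)
    obtain ⟨u, hu, hadj⟩ := h1 _ hBS
    rw [hSA, Set.mem_singleton_iff] at hu
    subst hu
    exact lambda_adj_rr m k B A hadj
  have block_meets : ∀ A : {A : Finset (Fin m) // A.card = k},
      (∃ r ∈ A.1, (Sum.inl r : Fin m ⊕ _) ∈ S) ∧
      (∃ r ∈ A.1, (Sum.inl r : Fin m ⊕ _) ∈ Sᶜ) := by
    intro A
    by_cases hA : (Sum.inr A : Fin m ⊕ _) ∈ S
    · constructor
      · by_contra h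
        push_neg at h
        apply hSnotsing A
        apply conn_isolated hcon hA
        rintro (r | B) hu hadj
        · exact h r ((lambda_adj_rl m k r A).mp hadj) hu
        · exact lambda_adj_rr m k A B hadj
      · obtain ⟨u, hu, hadj⟩ := h1 _ hA
        rcases u with r | B
        · exact ⟨r, (lambda_adj_rl m k r A).mp hadj, hu⟩
        · exact absurd hadj (lambda_adj_rr m k A B)
    · have hA' : (Sum.inr A : Fin m ⊕ _) ∈ Sᶜ := hA
      constructor
      · obtain ⟨u, hu, hadj⟩ := h2 _ hA'
        rcases u with r | B
        · exact ⟨r, (lambda_adj_rl m k r A).mp hadj, hu⟩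
        · exact absurd hadj (lambda_adj_rr m k A B)
      · by_contra h
        push_neg at h
        apply hScnotsing A
        apply conn_isolated hconc hA'
        rintro (r | B) hu hadj
        · exact h r ((lambda_adj_rl m k r A).mp hadj) hu
        · exact lambda_adj_rr m k A B hadj
  set PS : Finset (Fin m) := Finset.univ.filter (fun r => (Sum.inl r : Fin m ⊕ _) ∈ S) with hPS
  have memPS : ∀ r : Fin m, r ∈ PS ↔ (Sum.inl r : Fin m ⊕ _) ∈ S := by
    intro r; simp [hPS]
  have claim1 : (Finset.univ \ PS).card < k := by
    by_contra h
    push_neg at h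
    obtain ⟨t, ht, htc⟩ := Finset.exists_subset_card_eq h
    obtain ⟨⟨r, hr, hrS⟩, -⟩ := block_meets ⟨t, htc⟩
    have := ht hr
    rw [Finset.mem_sdiff] at this
    exact this.2 ((memPS r).mpr hrS)
  have claim2 : PS.card < k := by
    by_contra h
    push_neg at h
    obtain ⟨t, ht, htc⟩ := Finset.exists_subset_card_eq h
    obtain ⟨-, ⟨r, hr, hrS⟩⟩ := block_meets ⟨t, htc⟩
    exact hrS ((memPS r).mp (ht hr))
  have hcards : (Finset.univ \ PS).card = m - PS.card := by
    rw [Finset.card_sdiff_of_subset (Finset.subset_univ _), Finset.card_univ, Fintype.card_fin]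
  have hle : PS.card ≤ m := by
    simpa using Finset.card_le_card (Finset.subset_univ PS)
  omega

/-- A legal orbit of `Λ_{(m,k)}` (with `m ≥ 3`) contains no singleton or
co-singleton state. -/
lemma sing_elim (m k : ℕ) (hm : 2 * k - 1 ≤ m) (hk : 2 ≤ k)
    {mv : _ → Set (Fin m ⊕ {A : Finset (Fin m) // A.card = k})} {S}
    (hmv : IsMoveSystem (lambdaGraph m k) mv) (horb : IsLegalOrbit (lambdaGraph m k) mv S)
    {s} (hs : Reach mv S {s} ∨ Reach mv S {s}ᶜ) : False := by
  have hkm : k < m := by omega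
  have hm3 : 3 ≤ m := by omega
  -- first, reach a singleton at a point
  obtain ⟨p, hp⟩ : ∃ p : Fin m,
      Reach mv S {Sum.inl p} ∨ Reach mv S {(Sum.inl p : Fin m ⊕ _)}ᶜ := by
    rcases s with r | A
    · exact ⟨r, hs⟩
    · obtain ⟨p, hpA⟩ := exists_notMem_block hkm A
      refine ⟨p, (sing_prop hmv horb hs (by simp) ?_).1⟩
      exact fun h => hpA ((lambda_adj_lr m k p A).mp h)
  -- pick two more distinct points
  obtain ⟨q, hq, q', hq', hqq'⟩ :
      ∃ a ∈ Finset.univ.erase p, ∃ b ∈ Finset.univ.erase p, a ≠ b := by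
    apply Finset.one_lt_card.mp
    rw [Finset.card_erase_of_mem (Finset.mem_univ p), Finset.card_univ, Fintype.card_fin]
    omega
  have hqp : q ≠ p := (Finset.mem_erase.mp hq).1
  have hq'p : q' ≠ p := (Finset.mem_erase.mp hq').1
  have h1 := sing_prop hmv horb hp (t := Sum.inl q) (by simp [hqp])
    (lambda_adj_ll m k q p)
  have hq'sing := sing_prop hmv horb hp (t := Sum.inl q') (by simp [hq'p])
    (lambda_adj_ll m k q' p)
  have h2 := sing_prop hmv horb hq'sing.1 (t := Sum.inl q) (by simp [hqq'])
    (lambda_adj_ll m k q q')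
  have key : symmDiff ({Sum.inl q} : Set (Fin m ⊕ {A : Finset (Fin m) // A.card = k}))
      {Sum.inl p} = symmDiff ({Sum.inl q} : Set (Fin m ⊕ {A : Finset (Fin m) // A.card = k}))
      {Sum.inl q'} := by
    rw [← h1.2, ← h2.2]
  have := symmDiff_right_injective _ key
  rw [Set.singleton_eq_singleton_iff] at this
  exact hq'p (Sum.inl.inj this).symm

end Lambda

/-- for `m ≥ 2k−1` and `k ≥ 2`, `Λ_{(m,k)}` has no legal system. -/
theorem lambdaGraph_no_legal_system (m k : ℕ) (hm : 2 * k - 1 ≤ m) (hk : 2 ≤ k) :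
    ¬ HasLegalSystem (lambdaGraph m k) := by
  rintro ⟨mv, S, hmv, horb⟩
  have hS : Legal (lambdaGraph m k) S := horb S Relation.ReflTransGen.refl
  by_cases h1 : ∀ v ∈ S, ∃ u ∈ Sᶜ, (lambdaGraph m k).Adj v u
  · by_cases h2 : ∀ u ∈ Sᶜ, ∃ v ∈ S, (lambdaGraph m k).Adj u v
    · exact no_strongly_legal m k hm hk S ⟨hS, h1, h2⟩
    · push_neg at h2
      obtain ⟨u, hu, hall⟩ := h2
      have h := step_out hmv horb Relation.ReflTransGen.refl (v := u) hu
        (fun w hw hwS => hall w hwS hw)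
      exact sing_elim m k hm hk hmv horb (Or.inl h.1)
  · push_neg at h1
    obtain ⟨v, hv, hall⟩ := h1
    have h := step_in hmv horb Relation.ReflTransGen.refl (v := v) hv
      (fun w hw => by
        by_contra hwS
        exact hall w hwS hw)
    exact sing_elim m k hm hk hmv horb (Or.inr h.1)
end

section
/- For integers k and m with 3 < k < m < 2k−1, the bipartite graph Λ_{(m,k)} has a legal system: the system of moves in which every vertex of N_m has move N_m and every vertex of C(m,k) has move C(m,k) admits a legal orbit. -/
open SimpleGraph

/-!
Split `N_m` into a set `X` of size `k - 1` containing `0` but not `1`, and take for `A` the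
`k`-subsets containing both `0` and `1`. The two moves complement `X` and `A` respectively, so
the orbit of `X ⊔ A` consists of the four states `X^± ⊔ A^±`. Each of them is connected through
the hub `0` (on the `X` side) or `1` (on the `Xᶜ` side): since `|X| < k` and `|Xᶜ| < k`, every
`k`-subset meets both `X` and `Xᶜ`, and since `3 ≤ k < m` any element can be put into a
`k`-subset together with the hub, with or without the other hub.
-/

open Finset

section SumSet

variable {α β : Type*}

def sumSet (X : Set α) (A : Set β) : Set (α ⊕ β) :=
  {v | Sum.elim (· ∈ X) (· ∈ A) v}

variable {X : Set α} {A : Set β}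

@[simp]
lemma inl_mem_sumSet {a : α} : Sum.inl a ∈ sumSet X A ↔ a ∈ X := Iff.rfl

@[simp]
lemma inr_mem_sumSet {b : β} : Sum.inr b ∈ sumSet X A ↔ b ∈ A := Iff.rfl

lemma compl_sumSet : (sumSet X A)ᶜ = sumSet Xᶜ Aᶜ := by
  ext (a | b) <;> rfl

lemma symmDiff_isLeft_sumSet :
    symmDiff {v : α ⊕ β | v.isLeft} (sumSet X A) = sumSet Xᶜ A := by
  ext (a | b) <;> simp [Set.mem_symmDiff]

lemma symmDiff_isRight_sumSet :
    symmDiff {v : α ⊕ β | v.isRight} (sumSet X A) = sumSet X Aᶜ := by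
  ext (a | b) <;> simp [Set.mem_symmDiff]

lemma compl_mem_pair_compl {γ : Type*} {s t : Set γ} (ht : t ∈ ({s, sᶜ} : Set (Set γ))) :
    tᶜ ∈ ({s, sᶜ} : Set (Set γ)) := by
  rcases ht with rfl | rfl <;> simp

end SumSet

section SideMoves

variable {α β : Type*}

def sideMoves : α ⊕ β → Set (α ⊕ β) :=
  fun x => if x.isLeft then {y | y.isLeft = true} else {y | y.isRight = true}

lemma isMoveSystem_sideMoves (G : SimpleGraph (α ⊕ β))
    (hG : ∀ u v, G.Adj u v → u.isLeft ≠ v.isLeft) : IsMoveSystem G sideMoves := by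
  rintro (a | b)
  · exact ⟨rfl, fun u huv hu => hG u _ huv (by simpa [sideMoves] using hu)⟩
  · exact ⟨rfl, fun u huv hu => hG u _ huv (by simpa [sideMoves] using hu)⟩

lemma reach_sideMoves_sumSet {X : Set α} {A : Set β} {T : Set (α ⊕ β)}
    (hT : Reach sideMoves (sumSet X A) T) :
    ∃ X' ∈ ({X, Xᶜ} : Set (Set α)), ∃ A' ∈ ({A, Aᶜ} : Set (Set β)), T = sumSet X' A' := by
  induction hT with
  | refl => exact ⟨X, .inl rfl, A, .inl rfl, rfl⟩
  | tail _ hstep ih =>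
    obtain ⟨X', hX', A', hA', rfl⟩ := ih
    obtain ⟨a | b, rfl⟩ := hstep
    · exact ⟨X'ᶜ, compl_mem_pair_compl hX', A', hA', symmDiff_isLeft_sumSet⟩
    · exact ⟨X', hX', A'ᶜ, compl_mem_pair_compl hA', symmDiff_isRight_sumSet⟩

lemma isLegalOrbit_sideMoves_sumSet (G : SimpleGraph (α ⊕ β)) {X : Set α} {A : Set β}
    (hX : X.Nonempty) (hXc : Xᶜ.Nonempty)
    (hconn : ∀ X' ∈ ({X, Xᶜ} : Set (Set α)), ∀ A' ∈ ({A, Aᶜ} : Set (Set β)),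
      (G.induce (sumSet X' A')).Connected) :
    IsLegalOrbit G sideMoves (sumSet X A) := by
  intro T hT
  obtain ⟨X', hX', A', hA', rfl⟩ := reach_sideMoves_sumSet hT
  have hne : ∀ Y ∈ ({X, Xᶜ} : Set (Set α)), Y.Nonempty := by
    rintro _ (rfl | rfl)
    exacts [hX, hXc]
  obtain ⟨x, hx⟩ := hne X' hX'
  obtain ⟨y, hy⟩ := hne _ (compl_mem_pair_compl hX')
  refine ⟨⟨.inl x, hx⟩, ⟨.inl y, hy⟩, hconn X' hX' A' hA', ?_⟩
  rw [compl_sumSet]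
  exact hconn _ (compl_mem_pair_compl hX') _ (compl_mem_pair_compl hA')

end SideMoves

lemma exists_superset_card_eq_of_notMem {α : Type*} [Fintype α] [DecidableEq α]
    {s : Finset α} {d : α} {n : ℕ} (hd : d ∉ s) (hsn : #s ≤ n) (hn : n < Fintype.card α) :
    ∃ t, s ⊆ t ∧ d ∉ t ∧ #t = n := by
  have hs : s ⊆ univ.erase d := fun a ha => mem_erase.2 ⟨fun h => hd (h ▸ ha), mem_univ a⟩
  obtain ⟨t, hst, htd, ht⟩ := exists_subsuperset_card_eq hs hsn (by
    rw [card_erase_of_mem (mem_univ d), card_univ]; omega)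
  exact ⟨t, hst, fun h => (mem_erase.1 (htd h)).1 rfl, ht⟩

lemma exists_mem_of_card_compl_lt {α : Type*} [Fintype α] [DecidableEq α] {Y B : Finset α}
    (h : #Yᶜ < #B) : ∃ x ∈ B, x ∈ Y := by
  obtain ⟨x, hxB, hx⟩ := exists_mem_notMem_of_card_lt_card h
  exact ⟨x, hxB, by simpa using hx⟩

section LambdaGraph

variable {m k : ℕ}

lemma lambdaGraph_adj_inl_inr {r : Fin m} {B : {B : Finset (Fin m) // #B = k}} :
    (lambdaGraph m k).Adj (.inl r) (.inr B) ↔ r ∈ B.1 := by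
  simp [lambdaGraph]

lemma lambdaGraph_adj_isLeft_ne {u v : Fin m ⊕ {B : Finset (Fin m) // #B = k}}
    (h : (lambdaGraph m k).Adj u v) : u.isLeft ≠ v.isLeft := by
  rcases u with _ | _ <;> rcases v with _ | _ <;> simp_all [lambdaGraph]

lemma connected_induce_sumSet {X : Set (Fin m)} {A : Set {B : Finset (Fin m) // #B = k}}
    {c : Fin m} (hc : c ∈ X) (hmeet : ∀ B ∈ A, ∃ x ∈ B.1, x ∈ X)
    (hlink : ∀ x ∈ X, ∃ B ∈ A, c ∈ B.1 ∧ x ∈ B.1) :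
    ((lambdaGraph m k).induce (sumSet X A)).Connected := by
  set G := (lambdaGraph m k).induce (sumSet X A)
  have edge : ∀ {x B} (hx : x ∈ X) (hB : B ∈ A), x ∈ B.1 →
      G.Adj ⟨.inl x, hx⟩ ⟨.inr B, hB⟩ := fun _ _ h => lambdaGraph_adj_inl_inr.2 h
  have reach_inl : ∀ x (hx : x ∈ X), G.Reachable ⟨.inl c, hc⟩ ⟨.inl x, hx⟩ := by
    intro x hx
    obtain ⟨B, hB, hcB, hxB⟩ := hlink x hx
    exact (edge hc hB hcB).reachable.trans (edge hx hB hxB).symm.reachable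
  rw [connected_iff_exists_forall_reachable]
  refine ⟨⟨.inl c, hc⟩, ?_⟩
  rintro ⟨x | B, hv⟩
  · exact reach_inl x hv
  · obtain ⟨x, hxB, hx⟩ := hmeet B hv
    exact (reach_inl x hx).trans (edge hx hv hxB).reachable

variable (m k) in
def pairBlocks (c d : Fin m) : Set {B : Finset (Fin m) // #B = k} :=
  {B | c ∈ B.1 ∧ d ∈ B.1}

lemma pairBlocks_comm (c d : Fin m) : pairBlocks m k c d = pairBlocks m k d c := by
  ext B
  exact and_comm

lemma connected_induce_sumSet_pairBlocks {X : Set (Fin m)} {c d : Fin m}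
    (hk : 3 ≤ k) (hkm : k ≤ m) (hc : c ∈ X) :
    ((lambdaGraph m k).induce (sumSet X (pairBlocks m k c d))).Connected := by
  refine connected_induce_sumSet hc (fun B hB => ⟨c, hB.1, hc⟩) fun x _ => ?_
  obtain ⟨B, hsB, hB⟩ := exists_superset_card_eq (s := {c, d, x})
    (card_le_three.trans hk) (by simpa using hkm)
  exact ⟨⟨B, hB⟩, ⟨hsB (by simp), hsB (by simp)⟩, hsB (by simp), hsB (by simp)⟩

lemma connected_induce_sumSet_compl_pairBlocks {X : Set (Fin m)} {c d : Fin m}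
    (hk : 2 ≤ k) (hkm : k < m) (hc : c ∈ X) (hd : d ∉ X)
    (hmeet : ∀ B : {B : Finset (Fin m) // #B = k}, ∃ x ∈ B.1, x ∈ X) :
    ((lambdaGraph m k).induce (sumSet X (pairBlocks m k c d)ᶜ)).Connected := by
  refine connected_induce_sumSet hc (fun B _ => hmeet B) fun x hx => ?_
  have hds : d ∉ ({c, x} : Finset (Fin m)) := by
    simp only [mem_insert, mem_singleton, not_or]
    exact ⟨fun h => hd (h ▸ hc), fun h => hd (h ▸ hx)⟩
  obtain ⟨B, hsB, hdB, hB⟩ := exists_superset_card_eq_of_notMem hds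
    (card_le_two.trans hk) (by simpa using hkm)
  exact ⟨⟨B, hB⟩, fun h => hdB h.2, hsB (by simp), hsB (by simp)⟩

end LambdaGraph

/-- for `3 < k < m < 2k−1`, the system of moves assigning to each
vertex of `N_m` the move `N_m` and to each vertex of `C(m,k)` the move `C(m,k)`
is a legal system on `Λ_{(m,k)}`. -/
theorem lambdaGraph_bipartition_legal_system (m k : ℕ)
    (h1 : 3 < k) (h2 : k < m) (h3 : m < 2 * k - 1) :
    IsMoveSystem (lambdaGraph m k)
      (fun x => if x.isLeft then {y | y.isLeft = true} else {y | y.isRight = true}) ∧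
    ∃ S, IsLegalOrbit (lambdaGraph m k)
      (fun x => if x.isLeft then {y | y.isLeft = true} else {y | y.isRight = true}) S := by
  let c : Fin m := ⟨0, by omega⟩
  let d : Fin m := ⟨1, by omega⟩
  obtain ⟨X, hcX, hdX, hX⟩ := exists_superset_card_eq_of_notMem (s := {c}) (d := d) (n := k - 1)
    (by simp [c, d]) (by simp; omega) (by simp; omega)
  have hmeet : ∀ B : {B : Finset (Fin m) // #B = k}, ∃ x ∈ B.1, x ∈ X := fun B =>
    exists_mem_of_card_compl_lt (by rw [card_compl, hX, B.2]; simp; omega)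
  have hmeet_compl : ∀ B : {B : Finset (Fin m) // #B = k}, ∃ x ∈ B.1, x ∈ Xᶜ := fun B =>
    exists_mem_of_card_compl_lt (by rw [compl_compl, hX, B.2]; omega)
  have hc : c ∈ X := hcX (mem_singleton_self c)
  refine ⟨isMoveSystem_sideMoves _ fun _ _ => lambdaGraph_adj_isLeft_ne,
    sumSet X (pairBlocks m k c d), isLegalOrbit_sideMoves_sumSet _ ⟨c, hc⟩ ⟨d, hdX⟩ ?_⟩
  rintro _ (rfl | rfl) _ (rfl | rfl)
  · exact connected_induce_sumSet_pairBlocks (by omega) h2.le hc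
  · exact connected_induce_sumSet_compl_pairBlocks (by omega) h2 hc hdX hmeet
  · rw [pairBlocks_comm]
    exact connected_induce_sumSet_pairBlocks (by omega) h2.le hdX
  · rw [pairBlocks_comm, ← coe_compl]
    exact connected_induce_sumSet_compl_pairBlocks (by omega) h2 (by simpa using hdX)
      (by simpa using hc) hmeet_compl
end

section
/- Let Γ be a finite simplicial graph with v vertices and e edges. If Γ admits a legal system, then 1 − v/2 + e/4 ≥ 0. Moreover, if 1 − v/2 + e/4 = 0, then every state in the legal orbit induces a tree (as does its complement). -/
open SimpleGraph

/-!
Let `O` be the (finite) orbit. For an edge `uv`, the move at `u` flips the membership of `u`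
and fixes that of `v`, and vice versa, so the four membership patterns of `(u, v)` are
equidistributed over `O`: each edge lies inside `T` for a quarter of the states `T ∈ O`, and
inside `Tᶜ` for another quarter. A connected graph on `n` vertices has at least `n - 1` edges,
with equality only for trees, so every legal state has `|V| ≤ e(T) + e(Tᶜ) + 2`. Averaging over
`O` gives `|V| ≤ e(Γ) / 2 + 2`, and equality in the average forces equality for every state.
-/

open Finset

namespace SimpleGraph

variable {V : Type*} {G : SimpleGraph V}

lemma natCard_edgeSet_induce [Fintype V] [DecidableEq V] [DecidableRel G.Adj] (s : Set V)
    [DecidablePred (· ∈ s)] :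
    Nat.card (G.induce s).edgeSet = #{e ∈ G.edgeFinset | ∀ x ∈ e, x ∈ s} := by
  rw [Nat.card_eq_fintype_card, ← edgeFinset_card, ← card_map, map_edgeFinset_induce]
  congr 1
  ext e
  simp [mem_sym2_iff]

lemma Connected.ncard_le_natCard_edgeSet_add_one {s : Set V} [Finite s]
    (h : (G.induce s).Connected) : s.ncard ≤ Nat.card (G.induce s).edgeSet + 1 := by
  simpa only [Nat.card_coe_set_eq] using h.card_vert_le_card_edgeSet_add_one

lemma Connected.isTree_induce_of_natCard_edgeSet {s : Set V} [Finite s]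
    (h : (G.induce s).Connected) (hs : Nat.card (G.induce s).edgeSet + 1 = s.ncard) :
    (G.induce s).IsTree :=
  isTree_iff_connected_and_card.2 ⟨h, by rwa [Nat.card_coe_set_eq]⟩

end SimpleGraph

section LegalState

variable {V : Type*} [Fintype V] {G : SimpleGraph V} {T : Set V}

lemma Legal.card_le (h : Legal G T) :
    Fintype.card V ≤ Nat.card (G.induce T).edgeSet + Nat.card (G.induce Tᶜ).edgeSet + 2 := by
  obtain ⟨-, -, hconn, hconn_compl⟩ := h
  have := hconn.ncard_le_natCard_edgeSet_add_one
  have := hconn_compl.ncard_le_natCard_edgeSet_add_one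
  have := Nat.card_eq_fintype_card (α := V) ▸ Set.ncard_add_ncard_compl T
  omega

lemma Legal.isTree_of_card_eq (h : Legal G T)
    (heq : Fintype.card V = Nat.card (G.induce T).edgeSet + Nat.card (G.induce Tᶜ).edgeSet + 2) :
    (G.induce T).IsTree ∧ (G.induce Tᶜ).IsTree := by
  obtain ⟨-, -, hconn, hconn_compl⟩ := h
  have := hconn.ncard_le_natCard_edgeSet_add_one
  have := hconn_compl.ncard_le_natCard_edgeSet_add_one
  have := Nat.card_eq_fintype_card (α := V) ▸ Set.ncard_add_ncard_compl T
  exact ⟨hconn.isTree_induce_of_natCard_edgeSet (by omega),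
    hconn_compl.isTree_induce_of_natCard_edgeSet (by omega)⟩

end LegalState

section Translation

variable {V : Type*} {O : Finset (Set V)}

lemma card_filter_symmDiff {A : Set V} (hA : ∀ T ∈ O, symmDiff A T ∈ O)
    (P : Set V → Prop) [DecidablePred P] :
    #{T ∈ O | P (symmDiff A T)} = #{T ∈ O | P T} := by
  refine card_nbij' (symmDiff A) (symmDiff A) ?_ ?_ ?_ ?_
  · intro T hT
    rw [mem_coe, mem_filter] at hT ⊢
    exact ⟨hA T hT.1, hT.2⟩
  · intro T hT
    rw [mem_coe, mem_filter] at hT ⊢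
    rw [symmDiff_symmDiff_cancel_left]
    exact ⟨hA T hT.1, hT.2⟩
  · intro T _; exact symmDiff_symmDiff_cancel_left _ _
  · intro T _; exact symmDiff_symmDiff_cancel_left _ _

open scoped Classical

variable {A B : Set V} {u v : V}

lemma card_filter_notMem_notMem (hA : ∀ T ∈ O, symmDiff A T ∈ O)
    (hB : ∀ T ∈ O, symmDiff B T ∈ O) (huA : u ∈ A) (hvA : v ∉ A) (huB : u ∉ B) (hvB : v ∈ B) :
    #{T ∈ O | u ∉ T ∧ v ∉ T} = #{T ∈ O | u ∈ T ∧ v ∈ T} :=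
  calc #{T ∈ O | u ∉ T ∧ v ∉ T}
      = #{T ∈ O | u ∈ symmDiff A (symmDiff B T) ∧ v ∈ symmDiff A (symmDiff B T)} := by
        simp [Set.mem_symmDiff, huA, hvA, huB, hvB]
    _ = #{T ∈ O | u ∈ symmDiff A T ∧ v ∈ symmDiff A T} :=
        card_filter_symmDiff hB fun T => u ∈ symmDiff A T ∧ v ∈ symmDiff A T
    _ = #{T ∈ O | u ∈ T ∧ v ∈ T} := card_filter_symmDiff hA fun T => u ∈ T ∧ v ∈ T

lemma four_mul_card_filter_mem_mem (hA : ∀ T ∈ O, symmDiff A T ∈ O)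
    (hB : ∀ T ∈ O, symmDiff B T ∈ O) (huA : u ∈ A) (hvA : v ∉ A) (huB : u ∉ B) (hvB : v ∈ B) :
    4 * #{T ∈ O | u ∈ T ∧ v ∈ T} = #O := by
  have flipA : #{T ∈ O | u ∉ T ∧ v ∈ T} = #{T ∈ O | u ∈ T ∧ v ∈ T} :=
    calc #{T ∈ O | u ∉ T ∧ v ∈ T}
        = #{T ∈ O | u ∈ symmDiff A T ∧ v ∈ symmDiff A T} := by
          simp [Set.mem_symmDiff, huA, hvA]
      _ = _ := card_filter_symmDiff hA fun T => u ∈ T ∧ v ∈ T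
  have flipB : #{T ∈ O | u ∈ T ∧ v ∉ T} = #{T ∈ O | u ∈ T ∧ v ∈ T} :=
    calc #{T ∈ O | u ∈ T ∧ v ∉ T}
        = #{T ∈ O | u ∈ symmDiff B T ∧ v ∈ symmDiff B T} := by
          simp [Set.mem_symmDiff, huB, hvB]
      _ = _ := card_filter_symmDiff hB fun T => u ∈ T ∧ v ∈ T
  have flipAB := card_filter_notMem_notMem hA hB huA hvA huB hvB
  have splitU := card_filter_add_card_filter_not (s := O) (p := fun T => u ∈ T)
  have splitIn := card_filter_add_card_filter_not (s := {T ∈ O | u ∈ T}) (p := fun T => v ∈ T)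
  have splitOut := card_filter_add_card_filter_not (s := {T ∈ O | u ∉ T}) (p := fun T => v ∈ T)
  simp only [filter_filter] at splitIn splitOut
  omega

end Translation

lemma mul_sum_card_filter_eq {α β : Type*} {s : Finset α} {t : Finset β} {r : α → β → Prop}
    [∀ a b, Decidable (r a b)] {k : ℕ} (h : ∀ b ∈ t, k * #{a ∈ s | r a b} = #s) :
    k * ∑ a ∈ s, #{b ∈ t | r a b} = #s * #t := by
  have := sum_card_bipartiteAbove_eq_sum_card_bipartiteBelow (s := s) (t := t) r
  simp only [bipartiteAbove, bipartiteBelow] at this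
  rw [this, mul_sum, sum_congr rfl h, sum_const, smul_eq_mul, mul_comm]

section MoveSystem

open scoped Classical

variable {V : Type*} {G : SimpleGraph V} {m : V → Set V} {O : Finset (Set V)}

lemma IsMoveSystem.four_mul_card_filter_edge (hm : IsMoveSystem G m)
    (hO : ∀ v, ∀ T ∈ O, symmDiff (m v) T ∈ O) {e : Sym2 V} (he : e ∈ G.edgeSet) :
    4 * #{T ∈ O | ∀ x ∈ e, x ∈ T} = #O ∧ 4 * #{T ∈ O | ∀ x ∈ e, x ∈ Tᶜ} = #O := by
  induction e using Sym2.ind with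
  | _ u v =>
  have huv : G.Adj u v := he
  have hquarter := four_mul_card_filter_mem_mem (hO u) (hO v) (hm u).1 ((hm u).2 v huv.symm)
    ((hm v).2 u huv) (hm v).1
  simp only [Sym2.mem_iff, forall_eq_or_imp, forall_eq, Set.mem_compl_iff]
  refine ⟨hquarter, ?_⟩
  rwa [card_filter_notMem_notMem (hO u) (hO v) (hm u).1 ((hm u).2 v huv.symm)
    ((hm v).2 u huv) (hm v).1]

lemma IsMoveSystem.four_mul_sum_natCard_edgeSet_induce [Fintype V] [DecidableRel G.Adj]
    (hm : IsMoveSystem G m) (hO : ∀ v, ∀ T ∈ O, symmDiff (m v) T ∈ O) :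
    4 * ∑ T ∈ O, Nat.card (G.induce T).edgeSet = #O * #G.edgeFinset ∧
      4 * ∑ T ∈ O, Nat.card (G.induce Tᶜ).edgeSet = #O * #G.edgeFinset := by
  simp only [natCard_edgeSet_induce]
  constructor <;> refine mul_sum_card_filter_eq fun e he => ?_
  · convert (hm.four_mul_card_filter_edge hO (mem_edgeFinset.1 he)).1
  · convert (hm.four_mul_card_filter_edge hO (mem_edgeFinset.1 he)).2

lemma IsMoveSystem.sum_edge_excess_eq [Fintype V] [DecidableRel G.Adj]
    (hm : IsMoveSystem G m) (hO : ∀ v, ∀ T ∈ O, symmDiff (m v) T ∈ O) :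
    ∑ T ∈ O, ((Nat.card (G.induce T).edgeSet + Nat.card (G.induce Tᶜ).edgeSet + 2 : ℚ)
        - Fintype.card V)
      = 2 * #O * (1 - (Fintype.card V : ℚ) / 2 + (#G.edgeFinset : ℚ) / 4) := by
  obtain ⟨hin, hout⟩ := hm.four_mul_sum_natCard_edgeSet_induce hO
  have hin' : 4 * ∑ T ∈ O, (Nat.card (G.induce T).edgeSet : ℚ) = #O * #G.edgeFinset := by
    exact_mod_cast hin
  have hout' : 4 * ∑ T ∈ O, (Nat.card (G.induce Tᶜ).edgeSet : ℚ) = #O * #G.edgeFinset := by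
    exact_mod_cast hout
  simp only [sum_sub_distrib, sum_add_distrib, sum_const, nsmul_eq_mul]
  linear_combination hin' / 4 + hout' / 4

end MoveSystem

theorem legal_system_curvature_nonneg_general
    {V : Type*} [Fintype V] (G : SimpleGraph V) [DecidableRel G.Adj]
    (m : V → Set V) (S₀ : Set V)
    (hm : IsMoveSystem G m) (ho : IsLegalOrbit G m S₀) :
    0 ≤ 1 - (Fintype.card V : ℚ) / 2 + (G.edgeFinset.card : ℚ) / 4 ∧
    (1 - (Fintype.card V : ℚ) / 2 + (G.edgeFinset.card : ℚ) / 4 = 0 →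
      ∀ T, Reach m S₀ T → (G.induce T).IsTree ∧ (G.induce Tᶜ).IsTree) := by
  obtain ⟨O, hO⟩ : ∃ O : Finset (Set V), ∀ T, T ∈ O ↔ Reach m S₀ T :=
    ⟨(Set.toFinite _).toFinset, fun T => Set.Finite.mem_toFinset _⟩
  have hclosed : ∀ v, ∀ T ∈ O, symmDiff (m v) T ∈ O := fun v T hT =>
    (hO _).2 (((hO T).1 hT).tail ⟨v, rfl⟩)
  have hpos : (0 : ℚ) < #O := by exact_mod_cast card_pos.2 ⟨S₀, (hO S₀).2 .refl⟩
  have hexcess : ∀ T ∈ O, (0 : ℚ) ≤ Nat.card (G.induce T).edgeSet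
      + Nat.card (G.induce Tᶜ).edgeSet + 2 - Fintype.card V := fun T hT => by
    rw [sub_nonneg]
    exact_mod_cast (ho T ((hO T).1 hT)).card_le
  have hsum := hm.sum_edge_excess_eq hclosed
  refine ⟨?_, fun hzero T hT => ?_⟩
  · have := hsum ▸ sum_nonneg hexcess
    exact (mul_nonneg_iff_of_pos_left (by positivity)).1 this
  · rw [hzero, mul_zero, sum_eq_zero_iff_of_nonneg hexcess] at hsum
    have h0 := sub_eq_zero.1 (hsum T ((hO T).2 hT))
    exact (ho T hT).isTree_of_card_eq (by exact_mod_cast h0.symm)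

/-- if a finite graph with `v` vertices and `e` edges admits a
legal system then `1 − v/2 + e/4 ≥ 0`, and in case of equality every state of
the legal orbit (and its complement) induces a tree. -/
theorem legal_system_curvature_nonneg
    {V : Type*} [Fintype V] [DecidableEq V] (G : SimpleGraph V) [DecidableRel G.Adj]
    (m : V → Set V) (S₀ : Set V)
    (hm : IsMoveSystem G m) (ho : IsLegalOrbit G m S₀) :
    0 ≤ 1 - (Fintype.card V : ℚ) / 2 + (G.edgeFinset.card : ℚ) / 4 ∧
    (1 - (Fintype.card V : ℚ) / 2 + (G.edgeFinset.card : ℚ) / 4 = 0 →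
      ∀ T, Reach m S₀ T → (G.induce T).IsTree ∧ (G.induce Tᶜ).IsTree) :=
  legal_system_curvature_nonneg_general G m S₀ hm ho
end

section
/- Let Γ be a finite graph with a legal orbit O under a system of moves, and let K be a d-clique in Γ. Then the number of states S in O such that K ⊆ S equals |O|/2^d. -/
open SimpleGraph

private lemma reach_symmDiff {V : Type*} (m : V → Set V) (S₀ T : Set V)
    (h : Reach m S₀ T) (v : V) : Reach m S₀ (symmDiff (m v) T) :=
  Relation.ReflTransGen.tail h ⟨v, rfl⟩

private lemma half_lemma {V : Type*} [Fintype V] (G : SimpleGraph V) (m : V → Set V)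
    (S₀ : Set V) [DecidableEq V] (hm : IsMoveSystem G m) (v : V) (s : Finset V)
    (hadj : ∀ u ∈ s, G.Adj u v) :
    Nat.card {T : Set V // Reach m S₀ T ∧ ↑(insert v s) ⊆ T} * 2 =
      Nat.card {T : Set V // Reach m S₀ T ∧ (↑s : Set V) ⊆ T} := by
  classical
  have hmemflip : ∀ T : Set V, v ∈ symmDiff (m v) T ↔ v ∉ T := by
    intro T
    simp only [Set.mem_symmDiff]
    have hv := (hm v).1
    tauto
  have hmemkeep : ∀ (T : Set V) (u : V), u ∈ s → (u ∈ symmDiff (m v) T ↔ u ∈ T) := by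
    intro T u hu
    have hnm : u ∉ m v := (hm v).2 u (hadj u hu)
    simp only [Set.mem_symmDiff]
    tauto
  have hsub : ∀ T : Set V, ((↑s : Set V) ⊆ symmDiff (m v) T ↔ (↑s : Set V) ⊆ T) := by
    intro T
    constructor <;> intro h u hu
    · exact (hmemkeep T u (by exact_mod_cast hu)).1 (h hu)
    · exact (hmemkeep T u (by exact_mod_cast hu)).2 (h hu)
  have hinv : ∀ T : Set V, symmDiff (m v) (symmDiff (m v) T) = T := by
    intro T; exact symmDiff_symmDiff_cancel_left (m v) T
  have hreach2 : ∀ T : Set V, Reach m S₀ (symmDiff (m v) T) → Reach m S₀ T := by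
    intro T h
    have := reach_symmDiff m S₀ _ h v
    rwa [hinv T] at this
  -- equivalence between states containing v and states not containing v
  let e : {T : Set V // Reach m S₀ T ∧ (↑s : Set V) ⊆ T ∧ v ∈ T} ≃
      {T : Set V // Reach m S₀ T ∧ (↑s : Set V) ⊆ T ∧ v ∉ T} :=
    { toFun := fun T => ⟨symmDiff (m v) T.1,
        reach_symmDiff m S₀ T.1 T.2.1 v, (hsub T.1).2 T.2.2.1,
        by rw [hmemflip]; simpa using T.2.2.2⟩
      invFun := fun T => ⟨symmDiff (m v) T.1,
        reach_symmDiff m S₀ T.1 T.2.1 v, (hsub T.1).2 T.2.2.1,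
        by rw [hmemflip]; simpa using T.2.2.2⟩
      left_inv := fun T => Subtype.ext (hinv T.1)
      right_inv := fun T => Subtype.ext (hinv T.1) }
  have e1 : {T : Set V // Reach m S₀ T ∧ ↑(insert v s) ⊆ T} ≃
      {T : Set V // Reach m S₀ T ∧ (↑s : Set V) ⊆ T ∧ v ∈ T} := by
    apply Equiv.subtypeEquivRight
    intro T
    simp only [Finset.coe_insert, Set.insert_subset_iff]
    tauto
  have e2 : {T : Set V // Reach m S₀ T ∧ (↑s : Set V) ⊆ T} ≃
      ({T : Set V // Reach m S₀ T ∧ (↑s : Set V) ⊆ T ∧ v ∈ T} ⊕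
       {T : Set V // Reach m S₀ T ∧ (↑s : Set V) ⊆ T ∧ v ∉ T}) := by
    refine (Equiv.sumCompl (fun x : {T : Set V // Reach m S₀ T ∧ (↑s : Set V) ⊆ T} =>
      v ∈ x.1)).symm.trans (Equiv.sumCongr ?_ ?_) |>.symm.symm
    · exact (Equiv.subtypeSubtypeEquivSubtypeInter
          (fun T : Set V => Reach m S₀ T ∧ (↑s : Set V) ⊆ T) (fun T => v ∈ T)).trans
        (Equiv.subtypeEquivRight (fun T => by tauto))
    · exact (Equiv.subtypeSubtypeEquivSubtypeInter
          (fun T : Set V => Reach m S₀ T ∧ (↑s : Set V) ⊆ T) (fun T => v ∉ T)).trans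
        (Equiv.subtypeEquivRight (fun T => by tauto))
  have h1 : Nat.card {T : Set V // Reach m S₀ T ∧ ↑(insert v s) ⊆ T} =
      Nat.card {T : Set V // Reach m S₀ T ∧ (↑s : Set V) ⊆ T ∧ v ∈ T} :=
    Nat.card_congr e1
  have h2 : Nat.card {T : Set V // Reach m S₀ T ∧ (↑s : Set V) ⊆ T ∧ v ∈ T} =
      Nat.card {T : Set V // Reach m S₀ T ∧ (↑s : Set V) ⊆ T ∧ v ∉ T} :=
    Nat.card_congr e
  have h3 : Nat.card {T : Set V // Reach m S₀ T ∧ (↑s : Set V) ⊆ T} =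
      Nat.card {T : Set V // Reach m S₀ T ∧ (↑s : Set V) ⊆ T ∧ v ∈ T} +
      Nat.card {T : Set V // Reach m S₀ T ∧ (↑s : Set V) ⊆ T ∧ v ∉ T} := by
    rw [Nat.card_congr e2, Nat.card_sum]
  omega

/-- for a legal orbit `O` and a `d`-clique `K`, the number of
states of `O` containing `K` is `|O| / 2^d`. -/
theorem clique_in_fraction_of_legal_orbit
    {V : Type*} [Fintype V] (G : SimpleGraph V) (m : V → Set V) (S₀ : Set V)
    (hm : IsMoveSystem G m) (ho : IsLegalOrbit G m S₀)
    (d : ℕ) (K : Finset V) (hK : G.IsNClique d K) :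
    Nat.card {T : Set V // Reach m S₀ T ∧ ↑K ⊆ T} * 2 ^ d =
      Nat.card {T : Set V // Reach m S₀ T} := by
  classical
  obtain ⟨hclique, rfl⟩ := hK
  induction K using Finset.induction_on with
  | empty =>
    simp only [Finset.card_empty, pow_zero, mul_one, Finset.coe_empty, Set.empty_subset,
      and_true]
  | @insert v s hvs ih =>
    have hclique' : G.IsClique (↑s : Set V) :=
      hclique.subset (by simp [Set.subset_insert])
    have hadj : ∀ u ∈ s, G.Adj u v := by
      intro u hu
      exact hclique (by simp [hu]) (by simp) (fun h => hvs (h ▸ hu))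
    rw [Finset.card_insert_of_notMem hvs, pow_succ, ← mul_assoc, mul_right_comm, half_lemma G m S₀ hm v s hadj, ih hclique']
end

section
/- Let Γ be a finite simplicial graph containing no full subgraph of the form B★C where B has 2 vertices, C has 3 vertices, and neither B nor C is a clique. Let 𝒯 be the set of full (induced) 4-cycles of Γ. Then 𝒯 satisfies: (a) for any non-clique induced subgraphs J₁,J₂ with J₁★J₂ a full subgraph of Γ, there is K∈𝒯 containing J₁★J₂; (b) any two distinct members of 𝒯 intersect in a clique; (c) for K∈𝒯, any vertex adjacent to two nonadjacent vertices of K lies in K. -/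
open SimpleGraph

/-- `s` is the vertex set of a full (induced) 4-cycle of `G`. -/
def IsFullSquare {V : Type*} [DecidableEq V] (G : SimpleGraph V) (s : Finset V) : Prop :=
  ∃ a b c d : V, s = {a, b, c, d} ∧
    a ≠ b ∧ a ≠ c ∧ a ≠ d ∧ b ≠ c ∧ b ≠ d ∧ c ≠ d ∧
    G.Adj a b ∧ G.Adj b c ∧ G.Adj c d ∧ G.Adj d a ∧ ¬G.Adj a c ∧ ¬G.Adj b d

/-- In a full square a-b-c-d, a distinct nonadjacent pair must be a diagonal. -/
lemma square_diag {V : Type*} [DecidableEq V] {G : SimpleGraph V} {a b c d v₁ v₂ : V}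
    (hab : G.Adj a b) (hbc : G.Adj b c) (hcd : G.Adj c d) (hda : G.Adj d a)
    (h1 : v₁ ∈ ({a, b, c, d} : Finset V)) (h2 : v₂ ∈ ({a, b, c, d} : Finset V))
    (hne : v₁ ≠ v₂) (hnadj : ¬G.Adj v₁ v₂) :
    (v₁ = a ∧ v₂ = c) ∨ (v₁ = c ∧ v₂ = a) ∨ (v₁ = b ∧ v₂ = d) ∨ (v₁ = d ∧ v₂ = b) := by
  simp only [Finset.mem_insert, Finset.mem_singleton] at h1 h2
  rcases h1 with rfl | rfl | rfl | rfl <;> rcases h2 with rfl | rfl | rfl | rfl <;>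
    first
      | exact absurd rfl hne
      | tauto
      | exact absurd hab hnadj
      | exact absurd hbc hnadj
      | exact absurd hcd hnadj
      | exact absurd hda hnadj
      | exact absurd hab.symm hnadj
      | exact absurd hbc.symm hnadj
      | exact absurd hcd.symm hnadj
      | exact absurd hda.symm hnadj

lemma square_absorb {V : Type*} [DecidableEq V] (G : SimpleGraph V)
    (hno : ¬∃ B C : Finset V, Disjoint B C ∧ B.card = 2 ∧ C.card = 3 ∧
      (∀ b ∈ B, ∀ c ∈ C, G.Adj b c) ∧ ¬G.IsClique (B : Set V) ∧ ¬G.IsClique (C : Set V))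
    (a b c d v : V) (hac' : a ≠ c) (hbd' : b ≠ d)
    (hab : G.Adj a b) (hbc : G.Adj b c) (hcd : G.Adj c d) (hda : G.Adj d a)
    (hac : ¬G.Adj a c) (hbd : ¬G.Adj b d)
    (hva : G.Adj v a) (hvc : G.Adj v c) : v ∈ ({a, b, c, d} : Finset V) := by
  by_contra hv
  simp only [Finset.mem_insert, Finset.mem_singleton, not_or] at hv
  obtain ⟨hvan, hvbn, hvcn, hvdn⟩ := hv
  apply hno
  refine ⟨{a, c}, {b, d, v}, ?_, ?_, ?_, ?_, ?_, ?_⟩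
  · simp only [Finset.disjoint_left, Finset.mem_insert, Finset.mem_singleton]
    rintro x (rfl | rfl) <;> push_neg <;>
      exact ⟨by first | exact hab.ne | exact hbc.ne', by first | exact hda.ne' | exact hcd.ne,
        by first | exact hva.ne' | exact hvc.ne'⟩
  · exact Finset.card_eq_two.mpr ⟨a, c, hac', rfl⟩
  · exact Finset.card_eq_three.mpr ⟨b, d, v, hbd', fun h => hvbn h.symm, fun h => hvdn h.symm, rfl⟩
  · intro x hx y hy
    simp only [Finset.mem_insert, Finset.mem_singleton] at hx hy
    rcases hx with rfl | rfl <;> rcases hy with rfl | rfl | rfl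
    · exact hab
    · exact hda.symm
    · exact hva.symm
    · exact hbc.symm
    · exact hcd
    · exact hvc.symm
  · intro h
    exact hac (h (by simp) (by simp) hac')
  · intro h
    exact hbd (h (by simp) (by simp) hbd')

lemma square_link {V : Type*} [DecidableEq V] (G : SimpleGraph V)
    (hno : ¬∃ B C : Finset V, Disjoint B C ∧ B.card = 2 ∧ C.card = 3 ∧
      (∀ b ∈ B, ∀ c ∈ C, G.Adj b c) ∧ ¬G.IsClique (B : Set V) ∧ ¬G.IsClique (C : Set V)) :
    ∀ K : Finset V, IsFullSquare G K → ∀ v₁ ∈ K, ∀ v₂ ∈ K, v₁ ≠ v₂ →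
      ¬G.Adj v₁ v₂ → ∀ v : V, G.Adj v v₁ → G.Adj v v₂ → v ∈ K := by
  rintro K ⟨a, b, c, d, rfl, hab', hac', had', hbc', hbd', hcd',
    hab, hbc, hcd, hda, hac, hbd⟩ v₁ h1 v₂ h2 hne hnadj v hv1 hv2
  rcases square_diag hab hbc hcd hda h1 h2 hne hnadj with
    ⟨rfl, rfl⟩ | ⟨rfl, rfl⟩ | ⟨rfl, rfl⟩ | ⟨rfl, rfl⟩
  · exact square_absorb G hno v₁ b v₂ d v hac' hbd' hab hbc hcd hda hac hbd hv1 hv2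
  · exact square_absorb G hno v₂ b v₁ d v hac' hbd' hab hbc hcd hda hac hbd hv2 hv1
  · have := square_absorb G hno v₁ c v₂ a v hbd' hac'.symm hbc hcd hda hab hbd
      (fun h => hac h.symm) hv1 hv2
    simp only [Finset.mem_insert, Finset.mem_singleton] at this ⊢
    tauto
  · have := square_absorb G hno v₂ c v₁ a v hbd' hac'.symm hbc hcd hda hab hbd
      (fun h => hac h.symm) hv2 hv1
    simp only [Finset.mem_insert, Finset.mem_singleton] at this ⊢
    tauto

lemma square_subset {V : Type*} [DecidableEq V] (G : SimpleGraph V)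
    (hno : ¬∃ B C : Finset V, Disjoint B C ∧ B.card = 2 ∧ C.card = 3 ∧
      (∀ b ∈ B, ∀ c ∈ C, G.Adj b c) ∧ ¬G.IsClique (B : Set V) ∧ ¬G.IsClique (C : Set V))
    (K₁ K₂ : Finset V) (h1 : IsFullSquare G K₁) (h2 : IsFullSquare G K₂)
    (x y : V) (hx1 : x ∈ K₁) (hy1 : y ∈ K₁) (hx2 : x ∈ K₂) (hy2 : y ∈ K₂)
    (hxy : x ≠ y) (hnadj : ¬G.Adj x y) : K₂ ⊆ K₁ := by
  obtain ⟨a, b, c, d, rfl, hab', hac', had', hbc', hbd', hcd',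
    hab, hbc, hcd, hda, hac, hbd⟩ := h2
  have link := square_link G hno K₁ h1 x hx1 y hy1 hxy hnadj
  intro w hw
  rcases square_diag hab hbc hcd hda hx2 hy2 hxy hnadj with
    ⟨rfl, rfl⟩ | ⟨rfl, rfl⟩ | ⟨rfl, rfl⟩ | ⟨rfl, rfl⟩ <;>
  · simp only [Finset.mem_insert, Finset.mem_singleton] at hw
    rcases hw with rfl | rfl | rfl | rfl <;>
      first
        | exact hx1
        | exact hy1
        | exact link w (by assumption) ((by assumption : G.Adj _ w).symm)
        | exact link w ((by assumption : G.Adj _ w).symm) (by assumption)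
        | exact link w (by assumption) (by assumption)
        | exact link w ((by assumption : G.Adj _ w).symm) ((by assumption : G.Adj _ w).symm)

theorem full_squares_satisfy_caprace_conditions'
    {V : Type*} [Fintype V] [DecidableEq V] (G : SimpleGraph V)
    (hno : ¬∃ B C : Finset V, Disjoint B C ∧ B.card = 2 ∧ C.card = 3 ∧
      (∀ b ∈ B, ∀ c ∈ C, G.Adj b c) ∧ ¬G.IsClique (B : Set V) ∧ ¬G.IsClique (C : Set V)) :
    ((∀ J₁ J₂ : Finset V, Disjoint J₁ J₂ →
        ¬G.IsClique (J₁ : Set V) → ¬G.IsClique (J₂ : Set V) →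
        (∀ a ∈ J₁, ∀ b ∈ J₂, G.Adj a b) →
        ∃ K : Finset V, IsFullSquare G K ∧ J₁ ∪ J₂ ⊆ K) ∧
      (∀ K₁ K₂ : Finset V, IsFullSquare G K₁ → IsFullSquare G K₂ → K₁ ≠ K₂ →
        G.IsClique ((K₁ ∩ K₂ : Finset V) : Set V)) ∧
      (∀ K : Finset V, IsFullSquare G K → ∀ v₁ ∈ K, ∀ v₂ ∈ K, v₁ ≠ v₂ →
        ¬G.Adj v₁ v₂ → ∀ v : V, G.Adj v v₁ → G.Adj v v₂ → v ∈ K)) := by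
  refine ⟨?_, ?_, square_link G hno⟩
  · -- part (a)
    intro J₁ J₂ hdisj hnc1 hnc2 hjoin
    rw [SimpleGraph.isClique_iff, Set.Pairwise] at hnc1 hnc2
    push_neg at hnc1 hnc2
    obtain ⟨a, ha, c, hc, hac', hac⟩ := hnc1
    obtain ⟨b, hb, d, hd, hbd', hbd⟩ := hnc2
    rw [Finset.mem_coe] at ha hc hb hd
    have hJ1 : J₁ ⊆ {a, c} := by
      intro x hx
      by_contra hx'
      simp only [Finset.mem_insert, Finset.mem_singleton, not_or] at hx'
      refine hno ⟨{b, d}, {a, c, x}, ?_, ?_, ?_, ?_, ?_, ?_⟩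
      · simp only [Finset.disjoint_left, Finset.mem_insert, Finset.mem_singleton]
        rintro y (rfl | rfl) h
        · rcases h with rfl | rfl | rfl <;>
            exact Finset.disjoint_left.mp hdisj (by assumption) hb
        · rcases h with rfl | rfl | rfl <;>
            exact Finset.disjoint_left.mp hdisj (by assumption) hd
      · exact Finset.card_eq_two.mpr ⟨b, d, hbd', rfl⟩
      · exact Finset.card_eq_three.mpr ⟨a, c, x, hac', Ne.symm hx'.1, Ne.symm hx'.2, rfl⟩
      · intro p hp q hq
        simp only [Finset.mem_insert, Finset.mem_singleton] at hp hq
        have hp' : p ∈ J₂ := by rcases hp with rfl | rfl <;> assumption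
        have hq' : q ∈ J₁ := by rcases hq with rfl | rfl | rfl <;> assumption
        exact (hjoin q hq' p hp').symm
      · exact fun h => hbd (h (by simp) (by simp) hbd')
      · exact fun h => hac (h (by simp) (by simp) hac')
    have hJ2 : J₂ ⊆ {b, d} := by
      intro x hx
      by_contra hx'
      simp only [Finset.mem_insert, Finset.mem_singleton, not_or] at hx'
      refine hno ⟨{a, c}, {b, d, x}, ?_, ?_, ?_, ?_, ?_, ?_⟩
      · simp only [Finset.disjoint_left, Finset.mem_insert, Finset.mem_singleton]
        rintro y (rfl | rfl) h
        · rcases h with rfl | rfl | rfl <;>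
            exact Finset.disjoint_left.mp hdisj ha (by assumption)
        · rcases h with rfl | rfl | rfl <;>
            exact Finset.disjoint_left.mp hdisj hc (by assumption)
      · exact Finset.card_eq_two.mpr ⟨a, c, hac', rfl⟩
      · exact Finset.card_eq_three.mpr ⟨b, d, x, hbd', Ne.symm hx'.1, Ne.symm hx'.2, rfl⟩
      · intro p hp q hq
        simp only [Finset.mem_insert, Finset.mem_singleton] at hp hq
        have hp' : p ∈ J₁ := by rcases hp with rfl | rfl <;> assumption
        have hq' : q ∈ J₂ := by rcases hq with rfl | rfl | rfl <;> assumption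
        exact hjoin p hp' q hq'
      · exact fun h => hac (h (by simp) (by simp) hac')
      · exact fun h => hbd (h (by simp) (by simp) hbd')
    have hne : ∀ p ∈ J₁, ∀ q ∈ J₂, p ≠ q := fun p hp q hq h =>
      Finset.disjoint_left.mp hdisj hp (h ▸ hq)
    refine ⟨{a, b, c, d}, ⟨a, b, c, d, rfl, hne a ha b hb, hac', hne a ha d hd,
      (hne c hc b hb).symm, hbd', hne c hc d hd,
      hjoin a ha b hb, (hjoin c hc b hb).symm, hjoin c hc d hd, (hjoin a ha d hd).symm,
      hac, hbd⟩, ?_⟩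
    intro w hw
    simp only [Finset.mem_union] at hw
    rcases hw with hw | hw
    · have := hJ1 hw
      simp only [Finset.mem_insert, Finset.mem_singleton] at this ⊢
      tauto
    · have := hJ2 hw
      simp only [Finset.mem_insert, Finset.mem_singleton] at this ⊢
      tauto
  · -- part (b)
    intro K₁ K₂ h1 h2 hne12
    rw [SimpleGraph.isClique_iff, Set.Pairwise]
    by_contra hcl
    push_neg at hcl
    obtain ⟨x, hx, y, hy, hxy, hnadj⟩ := hcl
    rw [Finset.mem_coe, Finset.mem_inter] at hx hy
    exact hne12 (subset_antisymm
      (square_subset G hno K₂ K₁ h2 h1 x y hx.2 hy.2 hx.1 hy.1 hxy hnadj)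
      (square_subset G hno K₁ K₂ h1 h2 x y hx.1 hy.1 hx.2 hy.2 hxy hnadj))

/-- Caprace's relative hyperbolicity conditions for the
collection of full 4-cycles, when `Γ` has no full subgraph `B★C` with
`|B| = 2`, `|C| = 3` and `B, C` non-cliques. -/
theorem full_squares_satisfy_caprace_conditions
    {V : Type*} [Fintype V] [DecidableEq V] (G : SimpleGraph V)
    (hno : ¬∃ B C : Finset V, Disjoint B C ∧ B.card = 2 ∧ C.card = 3 ∧
      (∀ b ∈ B, ∀ c ∈ C, G.Adj b c) ∧ ¬G.IsClique (B : Set V) ∧ ¬G.IsClique (C : Set V)) :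
    ((∀ J₁ J₂ : Finset V, Disjoint J₁ J₂ →
        ¬G.IsClique (J₁ : Set V) → ¬G.IsClique (J₂ : Set V) →
        (∀ a ∈ J₁, ∀ b ∈ J₂, G.Adj a b) →
        ∃ K : Finset V, IsFullSquare G K ∧ J₁ ∪ J₂ ⊆ K) ∧
      (∀ K₁ K₂ : Finset V, IsFullSquare G K₁ → IsFullSquare G K₂ → K₁ ≠ K₂ →
        G.IsClique ((K₁ ∩ K₂ : Finset V) : Set V)) ∧
      (∀ K : Finset V, IsFullSquare G K → ∀ v₁ ∈ K, ∀ v₂ ∈ K, v₁ ≠ v₂ →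
        ¬G.Adj v₁ v₂ → ∀ v : V, G.Adj v v₁ → G.Adj v v₂ → v ∈ K)) := by
  exact full_squares_satisfy_caprace_conditions' G hno
end

section
/- Suppose a finite graph Γ has a legal system in which, for every state S of the legal orbit, the flag (clique) complexes of both the subgraph induced by S and the subgraph induced by V−S are contractible (in particular acyclic, so the number of i-cliques in S satisfies ∑_i (−1)^i c_i(S) = 1). Then κ(Γ) = ∑_{i≥−1} (−2)^{i+1}|K_i| = 0, where K_i is the set of i-cliques of Γ. -/
open SimpleGraph

/-- The number of cliques of `G` with exactly `j` vertices that are contained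
in the set `S`. -/
noncomputable def cliqueCount {V : Type*} (G : SimpleGraph V) (S : Set V) (j : ℕ) : ℕ :=
  Nat.card {K : Finset V // G.IsNClique j K ∧ (K : Set V) ⊆ S}

section Aux
open Finset
attribute [local instance] Classical.propDecidable

namespace LegalAux

variable {V : Type*} [Fintype V] {G : SimpleGraph V} {m : V → Set V} {S₀ : Set V}

noncomputable def orbit (m : V → Set V) (S₀ : Set V) : Finset (Set V) :=
  (Set.toFinite {T | Reach m S₀ T}).toFinset

lemma mem_orbit {T : Set V} : T ∈ orbit m S₀ ↔ Reach m S₀ T := Set.Finite.mem_toFinset _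

lemma orbit_nonempty : (orbit m S₀).Nonempty :=
  ⟨S₀, mem_orbit.2 Relation.ReflTransGen.refl⟩

lemma symmDiff_mem_orbit (v : V) {T : Set V} (hT : T ∈ orbit m S₀) :
    symmDiff (m v) T ∈ orbit m S₀ :=
  mem_orbit.2 ((mem_orbit.1 hT).tail ⟨v, rfl⟩)

lemma mv_inter (hm : IsMoveSystem G m) {K : Finset V} (hK : G.IsClique (K : Set V))
    {v : V} (hv : v ∈ K) : m v ∩ (K : Set V) = {v} := by
  ext u
  simp only [Set.mem_inter_iff, Set.mem_singleton_iff, Finset.mem_coe]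
  constructor
  · rintro ⟨hu1, hu2⟩
    by_contra hne
    exact (hm v).2 u (hK hu2 hv hne) hu1
  · intro h; subst h; exact ⟨(hm u).1, hv⟩

set_option linter.unusedSectionVars false in
lemma symmDiff_inter (a b c : Set V) :
    (symmDiff a b) ∩ c = symmDiff (a ∩ c) (b ∩ c) :=
  inf_symmDiff_distrib_right a b c

lemma fiber_card_step (hm : IsMoveSystem G m) {K : Finset V} (hK : G.IsClique (K : Set V))
    {v : V} (hv : v ∈ K) (A : Set V) :
    ((orbit m S₀).filter fun T => T ∩ (K : Set V) = A).card
      = ((orbit m S₀).filter fun T => T ∩ (K : Set V) = symmDiff {v} A).card := by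
  apply Finset.card_bij (fun T _ => symmDiff (m v) T)
  · intro T hT
    simp only [mem_filter] at hT ⊢
    refine ⟨symmDiff_mem_orbit v hT.1, ?_⟩
    rw [symmDiff_inter, mv_inter hm hK hv, hT.2]
  · intro T₁ h₁ T₂ h₂ h
    have := congrArg (fun X => symmDiff (m v) X) h
    simpa [symmDiff_symmDiff_cancel_left] using this
  · intro T' hT'
    simp only [mem_filter] at hT'
    refine ⟨symmDiff (m v) T', mem_filter.2 ⟨symmDiff_mem_orbit v hT'.1, ?_⟩,
      (symmDiff_symmDiff_cancel_left _ _)⟩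
    rw [symmDiff_inter, mv_inter hm hK hv, hT'.2, symmDiff_symmDiff_cancel_left]

lemma fiber_card_eq (hm : IsMoveSystem G m) {K : Finset V} (hK : G.IsClique (K : Set V)) :
    ∀ (n : ℕ) (A : Finset V), A ⊆ K → (K \ A).card = n →
      ((orbit m S₀).filter fun T => T ∩ (K : Set V) = (A : Set V)).card
        = ((orbit m S₀).filter fun T => T ∩ (K : Set V) = (K : Set V)).card := by
  intro n
  induction n with
  | zero =>
    intro A hA h0
    have : A = K := Finset.Subset.antisymm hA
      (by rwa [← Finset.sdiff_eq_empty_iff_subset, ← Finset.card_eq_zero])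
    rw [this]
  | succ n ih =>
    intro A hA hcard
    obtain ⟨v, hv⟩ : (K \ A).Nonempty := Finset.card_pos.mp (by omega)
    have hvK : v ∈ K := (Finset.mem_sdiff.1 hv).1
    have hvA : v ∉ A := (Finset.mem_sdiff.1 hv).2
    rw [fiber_card_step hm hK hvK (A : Set V)]
    have hins : symmDiff ({v} : Set V) (A : Set V) = ((insert v A : Finset V) : Set V) := by
      ext u
      simp only [Set.mem_symmDiff, Set.mem_singleton_iff, Finset.coe_insert, Set.mem_insert_iff,
        Finset.mem_coe]
      constructor
      · rintro (⟨rfl, -⟩ | ⟨h, -⟩) <;> tauto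
      · rintro (rfl | h)
        · exact Or.inl ⟨rfl, hvA⟩
        · exact Or.inr ⟨h, fun e => hvA (e ▸ h)⟩
    rw [hins]
    refine ih (insert v A) (Finset.insert_subset hvK hA) ?_
    rw [Finset.sdiff_insert, Finset.card_erase_of_mem hv, hcard]
    omega

lemma orbit_card (hm : IsMoveSystem G m) {K : Finset V} (hK : G.IsClique (K : Set V)) :
    (orbit m S₀).card
      = 2 ^ K.card * ((orbit m S₀).filter fun T => (K : Set V) ⊆ T).card := by
  have coe_filter : ∀ T : Set V, ((K.filter (· ∈ T) : Finset V) : Set V) = T ∩ (K : Set V) := by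
    intro T; ext u
    simp only [Finset.coe_filter, Set.mem_setOf_eq, Set.mem_inter_iff, Finset.mem_coe]
    tauto
  rw [Finset.card_eq_sum_card_fiberwise
    (f := fun T => K.filter (· ∈ T)) (t := K.powerset)
    (fun T _ => Finset.mem_powerset.2 (Finset.filter_subset _ _))]
  have hfib : ∀ A ∈ K.powerset,
      ((orbit m S₀).filter fun T => K.filter (· ∈ T) = A).card
        = ((orbit m S₀).filter fun T => (K : Set V) ⊆ T).card := by
    intro A hA
    have e1 : ((orbit m S₀).filter fun T => K.filter (· ∈ T) = A)
        = ((orbit m S₀).filter fun T => T ∩ (K : Set V) = (A : Set V)) := by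
      apply Finset.filter_congr
      intro T _
      constructor
      · rintro h; rw [← coe_filter T, h]
      · intro h
        apply Finset.coe_injective
        rw [coe_filter T, h]
    have e2 : ((orbit m S₀).filter fun T => (K : Set V) ⊆ T)
        = ((orbit m S₀).filter fun T => T ∩ (K : Set V) = (K : Set V)) := by
      apply Finset.filter_congr
      intro T _
      simp [Set.inter_eq_right]
    rw [e1, e2]
    exact fiber_card_eq hm hK (K \ A).card A (Finset.mem_powerset.1 hA) rfl
  rw [Finset.sum_congr rfl hfib, Finset.sum_const, Finset.card_powerset, smul_eq_mul]

lemma compl_fiber_card (hm : IsMoveSystem G m) {K : Finset V} (hK : G.IsClique (K : Set V)) :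
    ((orbit m S₀).filter fun T => (K : Set V) ⊆ Tᶜ).card
      = ((orbit m S₀).filter fun T => (K : Set V) ⊆ T).card := by
  have e1 : ((orbit m S₀).filter fun T => (K : Set V) ⊆ Tᶜ)
      = ((orbit m S₀).filter fun T => T ∩ (K : Set V) = ((∅ : Finset V) : Set V)) := by
    apply Finset.filter_congr
    intro T _
    simp only [Finset.coe_empty, Set.subset_compl_iff_disjoint_left,
      ← Set.disjoint_iff_inter_eq_empty, eq_iff_iff]
  have e2 : ((orbit m S₀).filter fun T => (K : Set V) ⊆ T)
      = ((orbit m S₀).filter fun T => T ∩ (K : Set V) = (K : Set V)) := by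
    apply Finset.filter_congr
    intro T _
    simp [Set.inter_eq_right]
  rw [e1, e2]
  exact fiber_card_eq hm hK K.card ∅ (Finset.empty_subset K) (by simp)


lemma cliqueCount_eq (G : SimpleGraph V) (S : Set V) (j : ℕ) :
    cliqueCount G S j
      = (Finset.univ.filter fun K : Finset V =>
          G.IsNClique j K ∧ (K : Set V) ⊆ S).card := by
  rw [cliqueCount, Nat.card_eq_fintype_card, Fintype.card_subtype]

lemma cliqueCount_zero (G : SimpleGraph V) (S : Set V) : cliqueCount G S 0 = 1 := by
  rw [cliqueCount, Nat.card_eq_fintype_card, Fintype.card_eq_one_iff]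
  refine ⟨⟨∅, ⟨by simp, by simp⟩⟩, ?_⟩
  rintro ⟨K, hK, -⟩
  exact Subtype.ext (Finset.card_eq_zero.mp hK.card_eq)

lemma sum_cliqueCount (G : SimpleGraph V) (j : ℕ) (f : Set V → Set V) :
    ∑ T ∈ orbit m S₀, cliqueCount G (f T) j
      = ∑ K ∈ Finset.univ.filter (fun K : Finset V => G.IsNClique j K),
          ((orbit m S₀).filter fun T => (K : Set V) ⊆ f T).card := by
  simp_rw [cliqueCount_eq, Finset.card_filter]
  rw [Finset.sum_comm, Finset.sum_filter]
  refine Finset.sum_congr rfl fun K _ => ?_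
  by_cases hP : G.IsNClique j K
  · simp [hP]
  · simp [hP]

lemma cliqueCount_univ_eq (G : SimpleGraph V) (j : ℕ) :
    cliqueCount G Set.univ j
      = (Finset.univ.filter fun K : Finset V => G.IsNClique j K).card := by
  rw [cliqueCount_eq]
  congr 1
  apply Finset.filter_congr
  intro K _
  simp

lemma double_count (hm : IsMoveSystem G m) (i : ℕ) :
    2 ^ (i + 1) * ∑ T ∈ orbit m S₀, (cliqueCount G T (i + 1) + cliqueCount G Tᶜ (i + 1))
      = 2 * cliqueCount G Set.univ (i + 1) * (orbit m S₀).card := by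
  have h1 : ∑ T ∈ orbit m S₀, cliqueCount G T (i+1)
      = ∑ K ∈ Finset.univ.filter (fun K : Finset V => G.IsNClique (i+1) K),
          ((orbit m S₀).filter fun T => (K : Set V) ⊆ T).card := sum_cliqueCount G (i+1) id
  have h2 : ∑ T ∈ orbit m S₀, cliqueCount G Tᶜ (i+1)
      = ∑ K ∈ Finset.univ.filter (fun K : Finset V => G.IsNClique (i+1) K),
          ((orbit m S₀).filter fun T => (K : Set V) ⊆ Tᶜ).card := sum_cliqueCount G (i+1) compl
  rw [Finset.sum_add_distrib, h1, h2, ← Finset.sum_add_distrib, Finset.mul_sum]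
  have hterm : ∀ K ∈ Finset.univ.filter (fun K : Finset V => G.IsNClique (i+1) K),
      2 ^ (i+1) * (((orbit m S₀).filter fun T => (K : Set V) ⊆ T).card
        + ((orbit m S₀).filter fun T => (K : Set V) ⊆ Tᶜ).card)
      = 2 * (orbit m S₀).card := by
    intro K hKmem
    have hK : G.IsNClique (i+1) K := (Finset.mem_filter.1 hKmem).2
    have hN : (orbit m S₀).card
        = 2 ^ (i+1) * ((orbit m S₀).filter fun T => (K : Set V) ⊆ T).card := by
      rw [orbit_card hm hK.isClique, hK.card_eq]
    rw [compl_fiber_card hm hK.isClique, hN]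
    ring
  rw [Finset.sum_congr rfl hterm, Finset.sum_const, smul_eq_mul, cliqueCount_univ_eq]
  ring

end LegalAux
end Aux

/-- if `Γ` has a legal system in which the flag complex of every
state of the legal orbit and of its complement is contractible (so its Euler
characteristic `∑ᵢ (−1)^i cᵢ = 1`), then `κ(Γ) = ∑_{i≥−1} (−1/2)^{i+1}|K_i| = 0`
(the sum over cliques of `Γ`, with the unique `(−1)`-clique being `∅`). -/
theorem curvature_zero_of_contractible_states
    {V : Type*} [Fintype V] (G : SimpleGraph V) (m : V → Set V) (S₀ : Set V)
    (hm : IsMoveSystem G m) (ho : IsLegalOrbit G m S₀)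
    (hcontr : ∀ T, Reach m S₀ T →
      (∑ i ∈ Finset.range (Fintype.card V),
        (-1 : ℚ) ^ i * (cliqueCount G T (i + 1) : ℚ) = 1) ∧
      (∑ i ∈ Finset.range (Fintype.card V),
        (-1 : ℚ) ^ i * (cliqueCount G Tᶜ (i + 1) : ℚ) = 1)) :
    ∑ j ∈ Finset.range (Fintype.card V + 1),
      (-(1 : ℚ) / 2) ^ j * (cliqueCount G Set.univ j : ℚ) = 0 := by
  classical
  set n := Fintype.card V with hn
  set O := LegalAux.orbit m S₀ with hO
  have hNpos : (0 : ℚ) < (O.card : ℚ) := by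
    exact_mod_cast Finset.card_pos.2 LegalAux.orbit_nonempty
  -- main identity
  have main : (O.card : ℚ) * ∑ i ∈ Finset.range n, (-(1:ℚ)/2) ^ i * (cliqueCount G Set.univ (i+1) : ℚ)
      = (O.card : ℚ) * 2 := by
    have step1 : ∀ i ∈ Finset.range n,
        (O.card : ℚ) * ((-(1:ℚ)/2) ^ i * (cliqueCount G Set.univ (i+1) : ℚ))
          = (-1:ℚ) ^ i * ∑ T ∈ O, ((cliqueCount G T (i+1) : ℚ) + (cliqueCount G Tᶜ (i+1) : ℚ)) := by
      intro i _
      have h := LegalAux.double_count (S₀ := S₀) hm i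
      have h' : (2:ℚ) ^ (i+1) * ∑ T ∈ O, ((cliqueCount G T (i+1) : ℚ) + (cliqueCount G Tᶜ (i+1) : ℚ))
          = 2 * (cliqueCount G Set.univ (i+1) : ℚ) * (O.card : ℚ) := by
        exact_mod_cast h
      have e : (-(1:ℚ)/2) ^ i = (-1:ℚ) ^ i / 2 ^ i := by
        rw [div_pow]
      have h2 : (2:ℚ) ^ i ≠ 0 := by positivity
      rw [e, div_mul_eq_mul_div, ← mul_div_assoc, div_eq_iff h2]
      linear_combination (-(-1:ℚ) ^ i / 2) * h'
    rw [Finset.mul_sum, Finset.sum_congr rfl step1]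
    simp_rw [Finset.mul_sum]
    rw [Finset.sum_comm]
    have step2 : ∀ T ∈ O,
        ∑ i ∈ Finset.range n,
          (-1:ℚ) ^ i * ((cliqueCount G T (i+1) : ℚ) + (cliqueCount G Tᶜ (i+1) : ℚ)) = 2 := by
      intro T hT
      have hr := hcontr T (LegalAux.mem_orbit.1 hT)
      have : ∑ i ∈ Finset.range n,
          (-1:ℚ) ^ i * ((cliqueCount G T (i+1) : ℚ) + (cliqueCount G Tᶜ (i+1) : ℚ))
          = (∑ i ∈ Finset.range n, (-1:ℚ) ^ i * (cliqueCount G T (i+1) : ℚ))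
            + ∑ i ∈ Finset.range n, (-1:ℚ) ^ i * (cliqueCount G Tᶜ (i+1) : ℚ) := by
        rw [← Finset.sum_add_distrib]
        exact Finset.sum_congr rfl fun i _ => by ring
      rw [this, hr.1, hr.2]
      norm_num
    rw [Finset.sum_congr rfl step2, Finset.sum_const, nsmul_eq_mul]
  have hsum : ∑ i ∈ Finset.range n, (-(1:ℚ)/2) ^ i * (cliqueCount G Set.univ (i+1) : ℚ) = 2 :=
    mul_left_cancel₀ (ne_of_gt hNpos) main
  rw [Finset.sum_range_succ', LegalAux.cliqueCount_zero]
  have e2 : ∑ i ∈ Finset.range n, (-(1:ℚ)/2) ^ (i+1) * (cliqueCount G Set.univ (i+1) : ℚ)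
      = (-(1:ℚ)/2) * ∑ i ∈ Finset.range n, (-(1:ℚ)/2) ^ i * (cliqueCount G Set.univ (i+1) : ℚ) := by
    rw [Finset.mul_sum]
    exact Finset.sum_congr rfl fun i _ => by ring
  rw [e2, hsum]
  norm_num
end
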